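/- arXiv:1903.03751 — 2 statements merged into one kernel-verified Lean document; each statement's English description precedes it below -/
import Mathlib

section
/- Let π be a Borel measure on (0,∞) with ∫_{(0,∞)} (y ∧ y²) π(dy) < ∞. Suppose there exist η > 0, β ∈ (0,1), δ > 0 with ∫_{(1,∞)} y^{1+β+δ} |π − μ_{η,β}|(dy) < ∞, and also η' > 0, β' ∈ (0,1), δ' > 0 with ∫_{(1,∞)} y^{1+β'+δ'} |π − μ_{η',β'}|(dy) < ∞. Then η = η' and β = β'. (In other words, the parameters η and β in Assumption 2 are uniquely determined by π.) -/
/-!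
Both parameters are read off the tail of `π`. Assumption 2 bounds the total variation of
`π - μ_{η,β}` on `(x,∞)` by `O(x^{-(1+β+δ)})` (Markov's inequality), while
`μ_{η,β}(x,∞) = c x^{-(1+β)}` with `c = η / (Γ(-1-β)(1+β)) > 0`. Hence
`x^{1+β} π(x,∞) → c`. A positive limit of `x^a f(x)` determines the exponent `a` and the
limit `c`, hence `β` and then `η`.
-/

open MeasureTheory Set

/-- The measure `μ_{η,β}(dy) = η dy/(Γ(−1−β) y^{2+β})` on `(0,∞)`. -/
noncomputable def stableLevyMeasure (η β : ℝ) : Measure ℝ :=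
  (volume.restrict (Set.Ioi (0 : ℝ))).withDensity
    (fun y => ENNReal.ofReal (η / (Real.Gamma (-1 - β) * y ^ (2 + β))))

/-- The total variation measure `|μ − ν|` of the difference of two (finite)
measures, given as the sum of the two Jordan parts `(μ − ν) + (ν − μ)`. -/
noncomputable def tvDiff (μ ν : Measure ℝ) : Measure ℝ := (μ - ν) + (ν - μ)

/-- Assumption 2 with parameters `(η, β, δ)`:
`∫_{(1,∞)} y^{1+β+δ} |π − μ_{η,β}|(dy) < ∞`. -/
noncomputable def Assumption2 (π : Measure ℝ) (η β δ : ℝ) : Prop :=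
  ∫⁻ y in Set.Ioi (1 : ℝ), ENNReal.ofReal (y ^ (1 + β + δ))
    ∂(tvDiff (π.restrict (Set.Ioi 1)) ((stableLevyMeasure η β).restrict (Set.Ioi 1))) < ⊤

open Filter Topology

lemma Real.Gamma_neg_one_sub_pos {β : ℝ} (hβ : β ∈ Ioo (0 : ℝ) 1) :
    0 < Real.Gamma (-1 - β) := by
  obtain ⟨hβ0, hβ1⟩ := hβ
  have hrec : Real.Gamma (-1 - β + 1 + 1) = (-β) * ((-1 - β) * Real.Gamma (-1 - β)) := by
    rw [Real.Gamma_add_one (by linarith), Real.Gamma_add_one (by linarith)]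
    ring_nf
  have hpos : 0 < Real.Gamma (-1 - β + 1 + 1) := Real.Gamma_pos_of_pos (by linarith)
  rw [hrec, ← mul_assoc, show -β * (-1 - β) = β * (1 + β) by ring] at hpos
  exact pos_of_mul_pos_right hpos (by positivity)

lemma Real.Gamma_neg_one_sub_mul_one_add_pos {β : ℝ} (hβ : β ∈ Ioo (0 : ℝ) 1) :
    0 < Real.Gamma (-1 - β) * (1 + β) :=
  mul_pos (Real.Gamma_neg_one_sub_pos hβ) (by linarith [hβ.1])

lemma stableLevyMeasure_Ioi {η β x : ℝ} (hη : 0 ≤ η) (hβ : β ∈ Ioo (0 : ℝ) 1)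
    (hx : 0 < x) :
    stableLevyMeasure η β (Ioi x)
      = ENNReal.ofReal (η / (Real.Gamma (-1 - β) * (1 + β)) * x ^ (-(1 + β))) := by
  have hΓ := Real.Gamma_neg_one_sub_pos hβ
  have hexp : -(2 + β) < -1 := by linarith [hβ.1]
  have hdensity : EqOn (fun y : ℝ => η / (Real.Gamma (-1 - β) * y ^ (2 + β)))
      (fun y => η / Real.Gamma (-1 - β) * y ^ (-(2 + β))) (Ioi x) := fun y hy => by
    dsimp only
    rw [Real.rpow_neg (hx.trans hy).le]
    field_simp
  rw [stableLevyMeasure, withDensity_apply _ measurableSet_Ioi,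
    Measure.restrict_restrict measurableSet_Ioi,
    inter_eq_self_of_subset_left (Ioi_subset_Ioi hx.le),
    ← ofReal_integral_eq_lintegral_ofReal]
  · rw [setIntegral_congr_fun measurableSet_Ioi hdensity, integral_const_mul,
      integral_Ioi_rpow_of_lt hexp hx, show -(2 + β) + 1 = -(1 + β) by ring, neg_div_neg_eq]
    congr 1
    field_simp
  · exact IntegrableOn.congr_fun ((integrableOn_Ioi_rpow_of_lt hexp hx).const_mul _)
      hdensity.symm measurableSet_Ioi
  · filter_upwards [ae_restrict_mem measurableSet_Ioi] with y hy
    exact div_nonneg hη (mul_pos hΓ (Real.rpow_pos_of_pos (hx.trans hy) _)).le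

lemma le_tvDiff_add (μ ν : Measure ℝ) [IsFiniteMeasure μ] [IsFiniteMeasure ν] :
    μ ≤ tvDiff μ ν + ν :=
  (Measure.sub_le_iff_le_add.1 le_rfl).trans <| by
    gcongr
    exact Measure.le_add_right le_rfl

lemma tvDiff_comm (μ ν : Measure ℝ) : tvDiff μ ν = tvDiff ν μ := add_comm _ _

lemma abs_toReal_sub_le_tvDiff (μ ν : Measure ℝ) [IsFiniteMeasure μ] [IsFiniteMeasure ν]
    (s : Set ℝ) : |(μ s).toReal - (ν s).toReal| ≤ (tvDiff μ ν s).toReal := by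
  have hμ : (μ s).toReal ≤ (tvDiff μ ν s).toReal + (ν s).toReal := by
    rw [← ENNReal.toReal_add (by simp [tvDiff]) (measure_ne_top ν s)]
    exact ENNReal.toReal_mono (by simp [tvDiff]) (le_tvDiff_add μ ν s)
  have hν : (ν s).toReal ≤ (tvDiff μ ν s).toReal + (μ s).toReal := by
    rw [tvDiff_comm, ← ENNReal.toReal_add (by simp [tvDiff]) (measure_ne_top μ s)]
    exact ENNReal.toReal_mono (by simp [tvDiff]) (le_tvDiff_add ν μ s)
  exact abs_sub_le_iff.2 ⟨by linarith, by linarith⟩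

lemma toReal_measure_Ioi_le_lintegral_rpow (T : Measure ℝ) {p x : ℝ} (hp : 0 ≤ p) (hx : 1 < x)
    (hT : ∫⁻ y in Ioi 1, ENNReal.ofReal (y ^ p) ∂T ≠ ⊤) :
    (T (Ioi x)).toReal ≤ (∫⁻ y in Ioi 1, ENNReal.ofReal (y ^ p) ∂T).toReal * x ^ (-p) := by
  have hx0 : 0 < x := one_pos.trans hx
  have hmarkov : ENNReal.ofReal (x ^ p) * T (Ioi x)
      ≤ ∫⁻ y in Ioi 1, ENNReal.ofReal (y ^ p) ∂T :=
    calc ENNReal.ofReal (x ^ p) * T (Ioi x)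
        = ∫⁻ _ in Ioi x, ENNReal.ofReal (x ^ p) ∂T := (setLIntegral_const _ _).symm
      _ ≤ ∫⁻ y in Ioi x, ENNReal.ofReal (y ^ p) ∂T :=
          setLIntegral_mono' measurableSet_Ioi fun y hy =>
            ENNReal.ofReal_le_ofReal (Real.rpow_le_rpow hx0.le (le_of_lt hy) hp)
      _ ≤ _ := lintegral_mono_set (Ioi_subset_Ioi hx.le)
  have hreal := ENNReal.toReal_mono hT hmarkov
  rw [ENNReal.toReal_mul, ENNReal.toReal_ofReal (Real.rpow_nonneg hx0.le p)] at hreal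
  rw [Real.rpow_neg hx0.le, ← div_eq_mul_inv, le_div_iff₀ (Real.rpow_pos_of_pos hx0 p)]
  linarith

lemma tendsto_rpow_mul_of_abs_sub_le {f : ℝ → ℝ} {p δ c M : ℝ} (hδ : 0 < δ)
    (hf : ∀ᶠ x in atTop, |f x - c * x ^ (-p)| ≤ M * x ^ (-(p + δ))) :
    Tendsto (fun x => x ^ p * f x) atTop (𝓝 c) := by
  rw [← tendsto_sub_nhds_zero_iff]
  refine squeeze_zero_norm' ?_ (by simpa using (tendsto_rpow_neg_atTop hδ).const_mul M)
  filter_upwards [hf, eventually_gt_atTop 0] with x hfx hx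
  have hxp : 0 < x ^ p := Real.rpow_pos_of_pos hx p
  calc ‖x ^ p * f x - c‖ = x ^ p * |f x - c * x ^ (-p)| := by
        rw [Real.norm_eq_abs, ← abs_of_pos hxp, ← abs_mul, abs_of_pos hxp, mul_sub,
          mul_left_comm, ← Real.rpow_add hx, add_neg_cancel, Real.rpow_zero, mul_one]
    _ ≤ x ^ p * (M * x ^ (-(p + δ))) := by gcongr
    _ = M * x ^ (-δ) := by
        rw [mul_left_comm, ← Real.rpow_add hx]
        ring_nf

lemma Assumption2.tendsto_rpow_mul_measure_Ioi {π : Measure ℝ} {η β δ : ℝ}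
    (hπ : π (Ioi 1) ≠ ⊤) (hη : 0 ≤ η) (hβ : β ∈ Ioo (0 : ℝ) 1) (hδ : 0 < δ)
    (h : Assumption2 π η β δ) :
    Tendsto (fun x : ℝ => x ^ (1 + β) * (π (Ioi x)).toReal) atTop
      (𝓝 (η / (Real.Gamma (-1 - β) * (1 + β)))) := by
  set c := η / (Real.Gamma (-1 - β) * (1 + β))
  have : IsFiniteMeasure (π.restrict (Ioi 1)) := ⟨by simpa using hπ.lt_top⟩
  have : IsFiniteMeasure ((stableLevyMeasure η β).restrict (Ioi 1)) :=
    ⟨by simp [stableLevyMeasure_Ioi hη hβ one_pos]⟩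
  refine tendsto_rpow_mul_of_abs_sub_le (M := (∫⁻ y in Ioi 1, ENNReal.ofReal (y ^ (1 + β + δ))
    ∂tvDiff (π.restrict (Ioi 1)) ((stableLevyMeasure η β).restrict (Ioi 1))).toReal) hδ ?_
  filter_upwards [eventually_gt_atTop 1] with x hx
  have hsub : Ioi x ⊆ Ioi 1 := Ioi_subset_Ioi hx.le
  have hc : 0 ≤ c := div_nonneg hη (Real.Gamma_neg_one_sub_mul_one_add_pos hβ).le
  have hstable :
      ((stableLevyMeasure η β).restrict (Ioi 1) (Ioi x)).toReal = c * x ^ (-(1 + β)) := by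
    rw [Measure.restrict_apply measurableSet_Ioi, inter_eq_self_of_subset_left hsub,
      stableLevyMeasure_Ioi hη hβ (one_pos.trans hx),
      ENNReal.toReal_ofReal (mul_nonneg hc (Real.rpow_nonneg (one_pos.trans hx).le _))]
  have htail := abs_toReal_sub_le_tvDiff (π.restrict (Ioi 1))
    ((stableLevyMeasure η β).restrict (Ioi 1)) (Ioi x)
  rw [hstable, Measure.restrict_apply measurableSet_Ioi,
    inter_eq_self_of_subset_left hsub] at htail
  exact htail.trans (toReal_measure_Ioi_le_lintegral_rpow _ (by linarith [hβ.1]) hx h.ne)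

lemma le_of_tendsto_rpow_mul {f : ℝ → ℝ} {a b c c' : ℝ} (hc : 0 < c)
    (ha : Tendsto (fun x => x ^ a * f x) atTop (𝓝 c))
    (hb : Tendsto (fun x => x ^ b * f x) atTop (𝓝 c')) : b ≤ a := by
  by_contra! hab
  have hfactor : (fun x => x ^ (b - a) * (x ^ a * f x)) =ᶠ[atTop] fun x => x ^ b * f x := by
    filter_upwards [eventually_gt_atTop 0] with x hx
    rw [← mul_assoc, ← Real.rpow_add hx, sub_add_cancel]
  exact not_tendsto_nhds_of_tendsto_atTop
    (((tendsto_rpow_atTop (sub_pos.2 hab)).atTop_mul_pos hc ha).congr' hfactor) c' hb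

lemma eq_of_tendsto_rpow_mul {f : ℝ → ℝ} {a b c c' : ℝ} (hc : 0 < c) (hc' : 0 < c')
    (ha : Tendsto (fun x => x ^ a * f x) atTop (𝓝 c))
    (hb : Tendsto (fun x => x ^ b * f x) atTop (𝓝 c')) : a = b ∧ c = c' := by
  obtain rfl : a = b := le_antisymm (le_of_tendsto_rpow_mul hc' hb ha)
    (le_of_tendsto_rpow_mul hc ha hb)
  exact ⟨rfl, tendsto_nhds_unique ha hb⟩

lemma measure_Ioi_one_le_lintegral_min_sq (π : Measure ℝ) :
    π (Ioi 1) ≤ ∫⁻ y in Ioi (0 : ℝ), ENNReal.ofReal (min y (y ^ 2)) ∂π :=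
  calc π (Ioi 1) = ∫⁻ _ in Ioi (1 : ℝ), 1 ∂π := by simp
    _ ≤ ∫⁻ y in Ioi (1 : ℝ), ENNReal.ofReal (min y (y ^ 2)) ∂π :=
        setLIntegral_mono' measurableSet_Ioi fun y (hy : 1 < y) =>
          ENNReal.one_le_ofReal.2 (le_min hy.le (by nlinarith))
    _ ≤ _ := lintegral_mono_set (Ioi_subset_Ioi zero_le_one)

/-- The parameters `η` and `β` in Assumption 2 are uniquely determined by the
Lévy measure `π`. -/
theorem stmt2 (π : Measure ℝ)
    (hmom : ∫⁻ y in Set.Ioi (0 : ℝ), ENNReal.ofReal (min y (y ^ 2)) ∂π < ⊤)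
    (η β δ : ℝ) (hη : 0 < η) (hβ : β ∈ Set.Ioo (0 : ℝ) 1) (hδ : 0 < δ)
    (hasp : Assumption2 π η β δ)
    (η' β' δ' : ℝ) (hη' : 0 < η') (hβ' : β' ∈ Set.Ioo (0 : ℝ) 1) (hδ' : 0 < δ')
    (hasp' : Assumption2 π η' β' δ') :
    η = η' ∧ β = β' := by
  have hπ : π (Ioi 1) ≠ ⊤ := ((measure_Ioi_one_le_lintegral_min_sq π).trans_lt hmom).ne
  have hD := Real.Gamma_neg_one_sub_mul_one_add_pos hβ
  have hD' := Real.Gamma_neg_one_sub_mul_one_add_pos hβ'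
  obtain ⟨hexp, hconst⟩ := eq_of_tendsto_rpow_mul (div_pos hη hD) (div_pos hη' hD')
    (hasp.tendsto_rpow_mul_measure_Ioi hπ hη.le hβ hδ)
    (hasp'.tendsto_rpow_mul_measure_Ioi hπ hη'.le hβ' hδ')
  obtain rfl : β = β' := by linarith
  exact ⟨(div_left_inj' hD.ne').1 hconst, rfl⟩
end

section
/- Let d ∈ ℕ, σ, b > 0, and let φ be the Gaussian density on ℝ^d and (P_t)_{t≥0} the Mehler (Ornstein–Uhlenbeck) semigroup. Let F : ℝ^d → ℂ be continuously differentiable and suppose there exist c₀ > 0 and n₀ ∈ ℕ such that |∇F(z)| ≤ c₀(1+|z|)^{n₀} for all z ∈ ℝ^d. Then there exists a constant C > 0 (depending only on c₀, n₀, d, b, σ) such that for all t ≥ 0 and x ∈ ℝ^d, | P_t F(x) − ∫_{ℝ^d} F(y) φ(y) dy | ≤ C e^{−bt} (1+|x|)^{n₀+1}. -/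
/-!
Mehler's formula writes `P_t F x - ∫ F φ` as `∫ (F (a • x + √(1 - a²) • y) - F y) φ(y) dy` with
`a = e^{-bt}`. The two arguments of `F` differ by at most `a (‖x‖ + ‖y‖)`, since
`1 - √(1 - a²) ≤ a`, so the mean value inequality bounds the integrand by
`c₀ a (1 + ‖x‖)^{n₀+1} (1 + ‖y‖)^{n₀+1} φ(y)`, and the Gaussian has finite polynomial moments.
-/

open MeasureTheory Real Filter

section GaussianMoments

variable {V : Type*} [NormedAddCommGroup V] [InnerProductSpace ℝ V] [FiniteDimensional ℝ V]
  [MeasurableSpace V] [BorelSpace V]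

theorem integrable_exp_neg_mul_sq_norm {c : ℝ} (hc : 0 < c) :
    Integrable (fun y : V => exp (-c * ‖y‖ ^ 2)) :=
  -- a non-integrable function would have integral `0`
  Integrable.of_integral_ne_zero <| by
    rw [GaussianFourier.integral_rexp_neg_mul_sq_norm hc]
    positivity

theorem one_add_pow_mul_exp_neg_mul_sq_le (k : ℕ) {c r : ℝ} (hc : 0 < c) (hr : 0 ≤ r) :
    (1 + r) ^ k * exp (-c * r ^ 2)
      ≤ k.factorial * exp (1 + 1 / (2 * c)) * exp (-(c / 2) * r ^ 2) := by
  have hpow : (1 + r) ^ k ≤ k.factorial * exp (1 + r) := by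
    have := pow_div_factorial_le_exp _ (by linarith : 0 ≤ 1 + r) k
    rwa [div_le_iff₀ (by positivity), mul_comm] at this
  -- completing the square: `r - (c / 2) * r ^ 2 ≤ 1 / (2 * c)`
  have hsq : 1 + r - c * r ^ 2 ≤ 1 + 1 / (2 * c) - c / 2 * r ^ 2 := by
    have : r - c / 2 * r ^ 2 ≤ 1 / (2 * c) := by
      rw [le_div_iff₀ (by positivity)]
      nlinarith [sq_nonneg (c * r - 1)]
    linarith
  calc (1 + r) ^ k * exp (-c * r ^ 2) ≤ k.factorial * exp (1 + r) * exp (-c * r ^ 2) := by gcongr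
    _ = k.factorial * exp (1 + r - c * r ^ 2) := by rw [mul_assoc, ← exp_add]; ring_nf
    _ ≤ k.factorial * exp (1 + 1 / (2 * c) - c / 2 * r ^ 2) := by gcongr
    _ = k.factorial * exp (1 + 1 / (2 * c)) * exp (-(c / 2) * r ^ 2) := by
      rw [mul_assoc, ← exp_add]; ring_nf

theorem integrable_one_add_norm_pow_mul_exp_neg_mul_sq (k : ℕ) {c : ℝ} (hc : 0 < c) :
    Integrable (fun y : V => (1 + ‖y‖) ^ k * exp (-c * ‖y‖ ^ 2)) :=
  ((integrable_exp_neg_mul_sq_norm (half_pos hc)).const_mul _).mono'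
    (by fun_prop) <| Eventually.of_forall fun y => by
      rw [norm_of_nonneg (by positivity)]
      exact one_add_pow_mul_exp_neg_mul_sq_le k hc (norm_nonneg y)

end GaussianMoments

section PolynomialGradient

variable {E G : Type*} [NormedAddCommGroup E] [NormedSpace ℝ E] [NormedAddCommGroup G]
  [NormedSpace ℝ G] {F : E → G} {c₀ : ℝ} {n : ℕ}

theorem nonneg_of_norm_fderiv_le (hF' : ∀ z, ‖fderiv ℝ F z‖ ≤ c₀ * (1 + ‖z‖) ^ n) : 0 ≤ c₀ := by
  simpa using (norm_nonneg _).trans (hF' 0)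

theorem norm_sub_le_of_norm_fderiv_le (hF : Differentiable ℝ F)
    (hF' : ∀ z, ‖fderiv ℝ F z‖ ≤ c₀ * (1 + ‖z‖) ^ n) {R : ℝ} {z w : E} (hz : ‖z‖ ≤ R)
    (hw : ‖w‖ ≤ R) : ‖F w - F z‖ ≤ c₀ * (1 + R) ^ n * ‖w - z‖ := by
  have hc₀ := nonneg_of_norm_fderiv_le hF'
  refine (convex_closedBall (0 : E) R).norm_image_sub_le_of_norm_fderiv_le (fun p _ => hF p)
    (fun p hp => (hF' p).trans ?_) (mem_closedBall_zero_iff.2 hz) (mem_closedBall_zero_iff.2 hw)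
  gcongr
  exact mem_closedBall_zero_iff.1 hp

theorem norm_le_of_norm_fderiv_le (hF : Differentiable ℝ F)
    (hF' : ∀ z, ‖fderiv ℝ F z‖ ≤ c₀ * (1 + ‖z‖) ^ n) (z : E) :
    ‖F z‖ ≤ (‖F 0‖ + c₀) * (1 + ‖z‖) ^ (n + 1) := by
  have hc₀ := nonneg_of_norm_fderiv_le hF'
  have hincr : ‖F z - F 0‖ ≤ c₀ * (1 + ‖z‖) ^ n * ‖z - 0‖ :=
    norm_sub_le_of_norm_fderiv_le hF hF' (by simp) le_rfl
  have hone : 1 ≤ (1 + ‖z‖) ^ (n + 1) := one_le_pow₀ (by linarith [norm_nonneg z])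
  calc ‖F z‖ ≤ ‖F 0‖ + ‖F z - F 0‖ := norm_le_insert' _ _
    _ ≤ ‖F 0‖ * (1 + ‖z‖) ^ (n + 1) + c₀ * (1 + ‖z‖) ^ n * (1 + ‖z‖) := by
      rw [sub_zero] at hincr
      gcongr
      · exact le_mul_of_one_le_right (norm_nonneg _) hone
      · exact hincr.trans (by gcongr; linarith)
    _ = (‖F 0‖ + c₀) * (1 + ‖z‖) ^ (n + 1) := by ring

end PolynomialGradient

section MehlerIncrement

variable {E G : Type*} [NormedAddCommGroup E] [NormedSpace ℝ E] [NormedAddCommGroup G]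
  [NormedSpace ℝ G] {a : ℝ}

theorem sqrt_one_sub_sq_mem (ha0 : 0 ≤ a) (ha1 : a ≤ 1) :
    0 ≤ √(1 - a ^ 2) ∧ √(1 - a ^ 2) ≤ 1 ∧ 1 - √(1 - a ^ 2) ≤ a := by
  have hsq : √(1 - a ^ 2) ^ 2 = 1 - a ^ 2 := sq_sqrt (by nlinarith)
  have hs0 := sqrt_nonneg (1 - a ^ 2)
  have hs1 : √(1 - a ^ 2) ≤ 1 := by nlinarith
  exact ⟨hs0, hs1, by nlinarith⟩

theorem norm_smul_add_sqrt_smul_le (ha0 : 0 ≤ a) (ha1 : a ≤ 1) (x y : E) :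
    ‖a • x + √(1 - a ^ 2) • y‖ ≤ ‖x‖ + ‖y‖ := by
  obtain ⟨hs0, hs1, -⟩ := sqrt_one_sub_sq_mem ha0 ha1
  calc ‖a • x + √(1 - a ^ 2) • y‖ ≤ a * ‖x‖ + √(1 - a ^ 2) * ‖y‖ := by
        refine (norm_add_le _ _).trans_eq ?_
        rw [norm_smul, norm_smul, norm_of_nonneg ha0, norm_of_nonneg hs0]
    _ ≤ ‖x‖ + ‖y‖ := by gcongr <;> apply mul_le_of_le_one_left (norm_nonneg _) <;> assumption

theorem norm_smul_add_sqrt_smul_sub_le (ha0 : 0 ≤ a) (ha1 : a ≤ 1) (x y : E) :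
    ‖a • x + √(1 - a ^ 2) • y - y‖ ≤ a * (‖x‖ + ‖y‖) := by
  obtain ⟨-, hs1, has⟩ := sqrt_one_sub_sq_mem ha0 ha1
  calc ‖a • x + √(1 - a ^ 2) • y - y‖ = ‖a • x - (1 - √(1 - a ^ 2)) • y‖ := by
        rw [sub_smul, one_smul]; abel_nf
    _ ≤ a * ‖x‖ + (1 - √(1 - a ^ 2)) * ‖y‖ := by
        refine (norm_sub_le _ _).trans_eq ?_
        rw [norm_smul, norm_smul, norm_of_nonneg ha0, norm_of_nonneg (by linarith)]
    _ ≤ a * (‖x‖ + ‖y‖) := by rw [mul_add]; gcongr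

theorem norm_comp_smul_add_sqrt_smul_sub_le {F : E → G} {c₀ : ℝ} {n : ℕ}
    (hF : Differentiable ℝ F) (hF' : ∀ z, ‖fderiv ℝ F z‖ ≤ c₀ * (1 + ‖z‖) ^ n)
    (ha0 : 0 ≤ a) (ha1 : a ≤ 1) (x y : E) :
    ‖F (a • x + √(1 - a ^ 2) • y) - F y‖
      ≤ c₀ * a * (1 + ‖x‖) ^ (n + 1) * (1 + ‖y‖) ^ (n + 1) := by
  have hc₀ := nonneg_of_norm_fderiv_le hF'
  set R := ‖x‖ + ‖y‖
  have hR : 1 + R ≤ (1 + ‖x‖) * (1 + ‖y‖) := by nlinarith [norm_nonneg x, norm_nonneg y]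
  calc ‖F (a • x + √(1 - a ^ 2) • y) - F y‖
      ≤ c₀ * (1 + R) ^ n * ‖a • x + √(1 - a ^ 2) • y - y‖ :=
        norm_sub_le_of_norm_fderiv_le hF hF' (le_add_of_nonneg_left (norm_nonneg x))
          (norm_smul_add_sqrt_smul_le ha0 ha1 x y)
    _ ≤ c₀ * (1 + R) ^ n * (a * (1 + R)) := by
        gcongr
        exact (norm_smul_add_sqrt_smul_sub_le ha0 ha1 x y).trans
          (mul_le_mul_of_nonneg_left (by linarith) ha0)
    _ = c₀ * a * (1 + R) ^ (n + 1) := by ring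
    _ ≤ c₀ * a * ((1 + ‖x‖) * (1 + ‖y‖)) ^ (n + 1) := by gcongr
    _ = c₀ * a * (1 + ‖x‖) ^ (n + 1) * (1 + ‖y‖) ^ (n + 1) := by rw [mul_pow]; ring

end MehlerIncrement

section Weighted

variable {V : Type*} [NormedAddCommGroup V] [MeasurableSpace V] {μ : Measure V} {w : V → ℝ}
  {k : ℕ}

theorem norm_mul_ofReal_le {z : ℂ} {r A p : ℝ} (hr : 0 ≤ r) (hz : ‖z‖ ≤ A * p) :
    ‖z * r‖ ≤ A * (p * r) := by
  rw [norm_mul, Complex.norm_real, norm_of_nonneg hr, ← mul_assoc]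
  exact mul_le_mul_of_nonneg_right hz hr

theorem integrable_mul_ofReal_of_norm_le {H : V → ℂ} {A : ℝ} (hH : AEStronglyMeasurable H μ)
    (hw : AEStronglyMeasurable w μ) (hw0 : ∀ y, 0 ≤ w y)
    (hint : Integrable (fun y => (1 + ‖y‖) ^ k * w y) μ)
    (hHA : ∀ y, ‖H y‖ ≤ A * (1 + ‖y‖) ^ k) :
    Integrable (fun y => H y * (w y : ℂ)) μ :=
  (hint.const_mul A).mono' (hH.mul (Complex.continuous_ofReal.comp_aestronglyMeasurable hw))
    (Eventually.of_forall fun y => norm_mul_ofReal_le (hw0 y) (hHA y))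

variable [NormedSpace ℝ V] [OpensMeasurableSpace V]

theorem norm_integral_comp_smul_add_sqrt_smul_sub_le {F : V → ℂ} {c₀ a : ℝ} {n : ℕ}
    (hF : ContDiff ℝ 1 F) (hF' : ∀ z, ‖fderiv ℝ F z‖ ≤ c₀ * (1 + ‖z‖) ^ n)
    (hw : AEStronglyMeasurable w μ) (hw0 : ∀ y, 0 ≤ w y)
    (hint : Integrable (fun y => (1 + ‖y‖) ^ (n + 1) * w y) μ)
    (ha0 : 0 ≤ a) (ha1 : a ≤ 1) (x : V) :
    ‖∫ y, F (a • x + √(1 - a ^ 2) • y) * w y ∂μ - ∫ y, F y * w y ∂μ‖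
      ≤ c₀ * a * (1 + ‖x‖) ^ (n + 1) * ∫ y, (1 + ‖y‖) ^ (n + 1) * w y ∂μ := by
  have hFd := hF.differentiable one_ne_zero
  have hdiff := norm_comp_smul_add_sqrt_smul_sub_le hFd hF' ha0 ha1 x
  have hD : Integrable (fun y => (F (a • x + √(1 - a ^ 2) • y) - F y) * w y) μ :=
    integrable_mul_ofReal_of_norm_le
      ((hF.continuous.comp (by fun_prop)).sub hF.continuous).aestronglyMeasurable hw hw0 hint hdiff
  have hI : Integrable (fun y => F y * w y) μ :=
    integrable_mul_ofReal_of_norm_le hF.continuous.aestronglyMeasurable hw hw0 hint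
      (norm_le_of_norm_fderiv_le hFd hF')
  have hD' : Integrable (fun y => F (a • x + √(1 - a ^ 2) • y) * w y) μ :=
    (hD.add hI).congr (Eventually.of_forall fun y => by simp only [Pi.add_apply]; ring)
  rw [← integral_sub hD' hI, ← integral_const_mul]
  simp_rw [← sub_mul]
  exact norm_integral_le_of_norm_le (hint.const_mul _)
    (Eventually.of_forall fun y => norm_mul_ofReal_le (hw0 y) (hdiff y))

end Weighted

theorem stmt13_general (d : ℕ) (σ b : ℝ) (hσ : 0 < σ) (hb : 0 < b)
    (φ : EuclideanSpace ℝ (Fin d) → ℝ)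
    (hφ : ∀ x, φ x = (b / (Real.pi * σ ^ 2)) ^ ((d : ℝ) / 2) *
        Real.exp (-(b / σ ^ 2) * ‖x‖ ^ 2))
    (P : ℝ → (EuclideanSpace ℝ (Fin d) → ℂ) → EuclideanSpace ℝ (Fin d) → ℂ)
    (hP : ∀ t G x, P t G x =
        ∫ y, G (Real.exp (-(b * t)) • x + Real.sqrt (1 - Real.exp (-(2 * b * t))) • y)
          * ((φ y : ℝ) : ℂ) ∂volume)
    (c₀ : ℝ) (hc₀ : 0 < c₀) (n₀ : ℕ) :
    ∃ C : ℝ, 0 < C ∧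
      ∀ F : EuclideanSpace ℝ (Fin d) → ℂ, ContDiff ℝ 1 F →
        (∀ z, ‖fderiv ℝ F z‖ ≤ c₀ * (1 + ‖z‖) ^ n₀) →
        ∀ t : ℝ, 0 ≤ t → ∀ x,
          ‖P t F x - ∫ y, F y * ((φ y : ℝ) : ℂ) ∂volume‖
            ≤ C * Real.exp (-(b * t)) * (1 + ‖x‖) ^ (n₀ + 1) := by
  set K := (b / (π * σ ^ 2)) ^ ((d : ℝ) / 2)
  have hφ_eq : φ = fun y => K * exp (-(b / σ ^ 2) * ‖y‖ ^ 2) := funext hφ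
  have hφ0 : ∀ y, 0 ≤ φ y := fun y => by rw [hφ_eq]; positivity
  have hφ_cont : Continuous φ := by rw [hφ_eq]; fun_prop
  have hint : Integrable (fun y => (1 + ‖y‖) ^ (n₀ + 1) * φ y) := by
    simpa only [hφ_eq, mul_left_comm] using
      (integrable_one_add_norm_pow_mul_exp_neg_mul_sq (V := EuclideanSpace ℝ (Fin d)) (n₀ + 1)
        (c := b / σ ^ 2) (by positivity)).const_mul K
  set M := ∫ y, (1 + ‖y‖) ^ (n₀ + 1) * φ y
  have hM : 0 ≤ M := integral_nonneg fun y => mul_nonneg (by positivity) (hφ0 y)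
  refine ⟨c₀ * M + 1, by positivity, fun F hF hF' t ht x => ?_⟩
  have ha1 : exp (-(b * t)) ≤ 1 := exp_le_one_iff.2 (by nlinarith)
  have hsq : exp (-(2 * b * t)) = exp (-(b * t)) ^ 2 := by rw [← exp_nat_mul]; ring_nf
  rw [hP, hsq]
  calc _ ≤ c₀ * exp (-(b * t)) * (1 + ‖x‖) ^ (n₀ + 1) * M :=
        norm_integral_comp_smul_add_sqrt_smul_sub_le hF hF' hφ_cont.aestronglyMeasurable hφ0
          hint (exp_pos _).le ha1 x
    _ ≤ (c₀ * M + 1) * exp (-(b * t)) * (1 + ‖x‖) ^ (n₀ + 1) := by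
        have : 0 ≤ exp (-(b * t)) * (1 + ‖x‖) ^ (n₀ + 1) := by positivity
        nlinarith

/-- For the Mehler (Ornstein–Uhlenbeck) semigroup with Gaussian density `φ` on
`ℝ^d`: for all `c₀ > 0` and `n₀ ∈ ℕ` there is a constant `C > 0` (depending
only on `c₀, n₀, d, b, σ`) such that for every `C¹` function `F : ℝ^d → ℂ` with
`|∇F(z)| ≤ c₀(1+|z|)^{n₀}`, all `t ≥ 0` and all `x`,
`|P_t F(x) − ∫ F y φ(y) dy| ≤ C e^{−bt} (1+|x|)^{n₀+1}`. -/
theorem stmt13 (d : ℕ) (hd : 0 < d) (σ b : ℝ) (hσ : 0 < σ) (hb : 0 < b)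
    (φ : EuclideanSpace ℝ (Fin d) → ℝ)
    (hφ : ∀ x, φ x = (b / (Real.pi * σ ^ 2)) ^ ((d : ℝ) / 2) *
        Real.exp (-(b / σ ^ 2) * ‖x‖ ^ 2))
    (P : ℝ → (EuclideanSpace ℝ (Fin d) → ℂ) → EuclideanSpace ℝ (Fin d) → ℂ)
    (hP : ∀ t G x, P t G x =
        ∫ y, G (Real.exp (-(b * t)) • x + Real.sqrt (1 - Real.exp (-(2 * b * t))) • y)
          * ((φ y : ℝ) : ℂ) ∂volume)
    (c₀ : ℝ) (hc₀ : 0 < c₀) (n₀ : ℕ) :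
    ∃ C : ℝ, 0 < C ∧
      ∀ F : EuclideanSpace ℝ (Fin d) → ℂ, ContDiff ℝ 1 F →
        (∀ z, ‖fderiv ℝ F z‖ ≤ c₀ * (1 + ‖z‖) ^ n₀) →
        ∀ t : ℝ, 0 ≤ t → ∀ x,
          ‖P t F x - ∫ y, F y * ((φ y : ℝ) : ℂ) ∂volume‖
            ≤ C * Real.exp (-(b * t)) * (1 + ‖x‖) ^ (n₀ + 1) :=
  stmt13_general d σ b hσ hb φ hφ P hP c₀ hc₀ n₀
end
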